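/- arXiv:1602.06906 — 3 statements merged into one kernel-verified Lean document; each statement's English description precedes it below -/
import Mathlib

section
/- Let X be the smallest class of groups containing the class A (finitely generated free groups and amenable groups) which is closed under directed unions and group extensions. Then X = ⋃_{a ordinal} X_a, where X_0 = {1}, X_a = Loc(X_{a-1}·A) for successor a, and X_a = ⋃_{b<a} X_b for limit a. In particular, for all ordinals a, b one has X_a · X_b ⊆ X_{a+b}. -/
/-- A class of groups. -/
def GroupClass : Type 1 := (G : Type) → [inst : Group G] → Prop

/-- A group is amenable if it admits a left-invariant finitely additive
probability measure on all subsets. -/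
def Amenable (G : Type) [Group G] : Prop :=
  ∃ m : Set G → ℝ,
    (∀ s, 0 ≤ m s) ∧ m Set.univ = 1 ∧
    (∀ s t : Set G, Disjoint s t → m (s ∪ t) = m s + m t) ∧
    (∀ (g : G) (s : Set G), m ((g * ·) '' s) = m s)

/-- The class `A` of finitely generated free groups and amenable groups. -/
def classA : GroupClass := fun G [Group G] =>
  (∃ n : ℕ, Nonempty (G ≃* FreeGroup (Fin n))) ∨ Amenable G

/-- `Loc Y`: groups all of whose finite subsets lie in a `Y`-subgroup. -/
def Loc (Y : GroupClass) : GroupClass := fun G [Group G] =>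
  ∀ s : Finset G, ∃ H : Subgroup G, (∀ x ∈ s, x ∈ H) ∧ Y H

/-- `Y·Z`: groups with a normal subgroup in `Y` and quotient in `Z`. -/
def classMul (Y Z : GroupClass) : GroupClass := fun G [Group G] =>
  ∃ H : Subgroup G, ∃ hn : H.Normal,
    Y H ∧ (letI : H.Normal := hn; Z (G ⧸ H))

/-- The transfinite hierarchy `X_a`: `X_0 = {1}`, `X_{a+1} = Loc(X_a · A)`,
and unions at limit ordinals. -/
def Xcl (A : GroupClass) : Ordinal → GroupClass := fun a =>
  Ordinal.limitRecOn a
    (fun (G : Type) [Group G] => Subsingleton G)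
    (fun _ X' => Loc (classMul X' A))
    (fun a _ IH => fun (G : Type) [Group G] => ∃ b, ∃ hb : b < a, IH b hb G)

/-- `C` is closed under directed unions. -/
def DirectedUnionClosed (C : GroupClass) : Prop :=
  ∀ (G : Type) [Group G] (ι : Type) (f : ι → Subgroup G),
    Directed (· ≤ ·) f → (∀ i, C (f i)) → (⨆ i, f i) = ⊤ → C G

/-- `C` is closed under extensions. -/
def ExtensionClosed (C : GroupClass) : Prop :=
  ∀ (G : Type) [Group G] (H : Subgroup G) (hn : H.Normal),
    C H → (letI : H.Normal := hn; C (G ⧸ H)) → C G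

/-- `C` contains the class `A`. -/
def Contains (A C : GroupClass) : Prop := ∀ (G : Type) [Group G], A G → C G

/-- The smallest class of groups containing `A` which is closed under directed
unions and extensions. -/
def smallestX (A : GroupClass) : GroupClass := fun (G : Type) [Group G] =>
  ∀ C : GroupClass, Contains A C → DirectedUnionClosed C → ExtensionClosed C → C G

/-!
The union `⋃ₐ X_a` contains `A` and is closed under directed unions (bound the levels of the
pieces by their supremum) and under extensions, because `X_a · X_b ⊆ X_{a+b}`. The latter is
proved by induction on `b`, pulling back along `G → G/H`: this gives `Y · Loc Z ⊆ Loc (Y · Z)`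
and `Y · (Z · A) ⊆ (Y · Z) · A`.

Conversely, let `C` contain `A` and be closed under directed unions and extensions. By induction
on `a`, every group embedding into an `X_a`-group lies in `C`: a group is the directed union of
its finitely generated subgroups, an extension restricts to an extension of subgroups, and
subgroups of `A`-groups lie in `C`. For the last point, subgroups of amenable groups are amenable,
and subgroups of free groups are free (Nielsen–Schreier), while a free group is the directed union
of the free subgroups on finitely many of its generators.
-/

universe u

open Function

def IsoClosed (C : GroupClass) : Prop :=
  ∀ ⦃G H : Type⦄ [Group G] [Group H], G ≃* H → C G → C H

def ContainsTrivial (C : GroupClass) : Prop :=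
  ∀ (G : Type) [Group G] [Subsingleton G], C G

/-- Stated for embeddings rather than subgroups, since the classes `C` in `smallestX` need not be
closed under isomorphism. -/
def SubgroupsIn (Y C : GroupClass) : Prop :=
  ∀ ⦃L K : Type⦄ [Group L] [Group K] (f : L →* K), Injective f → Y K → C L

def xclUnion (A : GroupClass) : GroupClass := fun G [Group G] => ∃ a : Ordinal.{u}, Xcl A a G

namespace MonoidHom

variable {G K : Type} [Group G] [Group K]

theorem subgroupComap_injective {f : G →* K} (hf : Injective f) (M : Subgroup K) :
    Injective (f.subgroupComap M) :=
  fun _ _ h => Subtype.ext (hf (congrArg Subtype.val h))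

def kerSubgroupComapEquiv (f : G →* K) (M : Subgroup K) : (f.subgroupComap M).ker ≃* f.ker :=
  (MulEquiv.subgroupCongr (by
      ext x
      rw [MonoidHom.mem_ker, Subgroup.mem_subgroupOf, MonoidHom.mem_ker, Subtype.ext_iff]
      rfl)).trans
    (Subgroup.subgroupOfEquivOfLe (f.ker_le_comap M))

end MonoidHom

namespace Amenable

variable {G H : Type} [Group G] [Group H]

theorem of_finite [Finite G] : Amenable G := by
  have hcard : (Nat.card G : ℝ) ≠ 0 := by exact_mod_cast Nat.card_pos.ne'
  refine ⟨fun s => s.ncard / Nat.card G, fun s => by positivity, by simp [hcard],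
    fun s t hst => ?_, fun g s => ?_⟩
  · simp only [Set.ncard_union_eq hst (Set.toFinite s) (Set.toFinite t), Nat.cast_add, add_div]
  · simp only [Set.ncard_image_of_injective s (mul_right_injective g)]

theorem of_equivariant (hG : Amenable G) (p : G → H) (φ : H →* G)
    (hp : ∀ h g, p (φ h * g) = h * p g) : Amenable H := by
  obtain ⟨m, hm0, hm1, hadd, hinv⟩ := hG
  refine ⟨fun s => m (p ⁻¹' s), fun s => hm0 _, by simpa using hm1,
    fun s t hst => by simpa using hadd _ _ (hst.preimage p), fun h s => ?_⟩
  have : p ⁻¹' ((h * ·) '' s) = (φ h * ·) '' (p ⁻¹' s) := by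
    ext g
    simp [Set.image_mul_left, ← map_inv, hp]
  simp only [this, hinv]

theorem of_mulEquiv (hG : Amenable G) (e : G ≃* H) : Amenable H :=
  hG.of_equivariant e e.symm.toMonoidHom fun h g => by simp

theorem subgroup (hG : Amenable G) (K : Subgroup G) : Amenable K := by
  let r : G → G := fun g => (Quotient.mk (QuotientGroup.rightRel K) g).out
  have hr : ∀ g, g * (r g)⁻¹ ∈ K := fun g =>
    QuotientGroup.rightRel_apply.mp (Quotient.mk_out g)
  have hr_mul : ∀ k ∈ K, ∀ g, r (k * g) = r g := fun k hk g => congrArg Quotient.out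
    (Quotient.sound (QuotientGroup.rightRel_apply.mpr (by simpa using inv_mem hk)))
  exact hG.of_equivariant (fun g => ⟨g * (r g)⁻¹, hr g⟩) K.subtype fun k g => by
    ext; simp [hr_mul k k.2, mul_assoc]

theorem of_injective (hH : Amenable H) (f : G →* H) (hf : Injective f) : Amenable G :=
  (hH.subgroup f.range).of_mulEquiv (MonoidHom.ofInjective hf).symm

end Amenable

theorem isoClosed_classA : IsoClosed classA := by
  rintro G H _ _ e (⟨n, ⟨i⟩⟩ | h)
  · exact Or.inl ⟨n, ⟨e.symm.trans i⟩⟩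
  · exact Or.inr (h.of_mulEquiv e)

theorem containsTrivial_classA : ContainsTrivial classA :=
  fun _ _ _ => Or.inr Amenable.of_finite

section Closure

variable {Y Z W : GroupClass} {G K : Type} [Group G] [Group K]

theorem classMul_mono {Y' Z' : GroupClass} (hY : Contains Y Y') (hZ : Contains Z Z') :
    Contains (classMul Y Z) (classMul Y' Z') :=
  fun _ _ ⟨H, hH, hYH, hZQ⟩ => ⟨H, hH, hY _ hYH, hZ _ hZQ⟩

theorem loc_mono (h : Contains Y Z) : Contains (Loc Y) (Loc Z) :=
  fun _ _ hG s => (hG s).imp fun _ => And.imp_right (h _)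

theorem classMul_of_surjective (hZ : IsoClosed Z) (f : G →* K) (hf : Surjective f)
    (hker : Y f.ker) (hK : Z K) : classMul Y Z G :=
  ⟨f.ker, inferInstance, hker, hZ (QuotientGroup.quotientKerEquivOfSurjective f hf).symm hK⟩

theorem classMul_of_left (hY : IsoClosed Y) (hZ : ContainsTrivial Z) (h : Y G) :
    classMul Y Z G :=
  ⟨⊤, inferInstance, hY Subgroup.topEquiv.symm h,
    @hZ _ _ QuotientGroup.subsingleton_quotient_top⟩

theorem classMul_of_right (hY : ContainsTrivial Y) (hZ : IsoClosed Z) (h : Z G) :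
    classMul Y Z G :=
  ⟨⊥, inferInstance, hY _, hZ QuotientGroup.quotientBot.symm h⟩

theorem mem_of_classMul_subsingleton (hY : IsoClosed Y)
    (h : classMul Y (fun Q [Group Q] => Subsingleton Q) G) : Y G := by
  obtain ⟨H, hH, hYH, hQ⟩ := h
  obtain rfl : H = ⊤ := Subgroup.eq_top_iff' H |>.mpr fun g =>
    (QuotientGroup.eq_one_iff g).mp (Subsingleton.elim _ _)
  exact hY Subgroup.topEquiv hYH

theorem loc_of_mem (hY : IsoClosed Y) (h : Y G) : Loc Y G :=
  fun _ => ⟨⊤, fun x _ => Subgroup.mem_top x, hY Subgroup.topEquiv.symm h⟩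

theorem loc_of_iSup_eq_top {ι : Type} [Nonempty ι] (f : ι → Subgroup G)
    (hdir : Directed (· ≤ ·) f) (hf : ∀ i, Y (f i)) (htop : ⨆ i, f i = ⊤) : Loc Y G := by
  intro s
  have hs : (s : Set G) ⊆ ⋃ i, (f i : Set G) := by
    rw [← Subgroup.coe_iSup_of_directed hdir, htop]
    exact Set.subset_univ _
  obtain ⟨i, hi⟩ :=
    (hdir.mono_comp _ fun _ _ h => h).exists_mem_subset_of_finset_subset_biUnion hs
  exact ⟨f i, fun x hx => hi hx, hf i⟩

theorem IsoClosed.loc (hY : IsoClosed Y) : IsoClosed (Loc Y) := by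
  classical
  intro G G' _ _ e h s
  obtain ⟨H, hsH, hH⟩ := h (s.image e.symm)
  exact ⟨H.map (e : G →* G'), fun x hx =>
    ⟨e.symm x, hsH _ (Finset.mem_image_of_mem _ hx), e.apply_symm_apply x⟩,
    hY (e.subgroupMap H) hH⟩

theorem IsoClosed.classMul (hY : IsoClosed Y) (hZ : IsoClosed Z) :
    IsoClosed (classMul Y Z) := by
  rintro G G' _ _ e ⟨H, hH, hYH, hZQ⟩
  refine classMul_of_surjective hZ ((QuotientGroup.mk' H).comp e.symm.toMonoidHom)
    ((QuotientGroup.mk'_surjective H).comp e.symm.surjective) ?_ hZQ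
  rw [← MonoidHom.comap_ker, QuotientGroup.ker_mk', ← Subgroup.map_equiv_eq_comap_symm']
  exact hY (e.subgroupMap H) hYH

theorem classMul_comap (hY : IsoClosed Y) (hZ : IsoClosed Z) (f : G →* K) (hf : Surjective f)
    {M : Subgroup K} (hker : Y f.ker) (hM : Z M) : classMul Y Z (M.comap f) :=
  classMul_of_surjective hZ (f.subgroupComap M) (f.subgroupComap_surjective_of_surjective M hf)
    (hY (f.kerSubgroupComapEquiv M).symm hker) hM

theorem classMul_assoc_le (hY : IsoClosed Y) (hZ : IsoClosed Z) (hW : IsoClosed W) :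
    Contains (classMul Y (classMul Z W)) (classMul (classMul Y Z) W) := by
  rintro G _ ⟨H, hH, hYH, N, hN, hZN, hWQ⟩
  have hπ := QuotientGroup.mk'_surjective H
  refine classMul_of_surjective hW ((QuotientGroup.mk' N).comp (QuotientGroup.mk' H))
    ((QuotientGroup.mk'_surjective N).comp hπ) ?_ hWQ
  rw [← MonoidHom.comap_ker, QuotientGroup.ker_mk']
  exact classMul_comap hY hZ _ hπ (by rwa [QuotientGroup.ker_mk']) hZN

theorem classMul_loc_le (hY : IsoClosed Y) (hZ : IsoClosed Z) :
    Contains (classMul Y (Loc Z)) (Loc (classMul Y Z)) := by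
  classical
  rintro G _ ⟨H, hH, hYH, hZQ⟩ s
  obtain ⟨Qb, hsQ, hQ⟩ := hZQ (s.image (QuotientGroup.mk' H))
  refine ⟨Qb.comap (QuotientGroup.mk' H), fun x hx => hsQ _ (Finset.mem_image_of_mem _ hx),
    classMul_comap hY hZ _ (QuotientGroup.mk'_surjective H) ?_ hQ⟩
  rwa [QuotientGroup.ker_mk']

end Closure

section Hierarchy

variable (A : GroupClass)

theorem xcl_zero : Xcl A 0 = fun (G : Type) [Group G] => Subsingleton G := by
  unfold Xcl; exact Ordinal.limitRecOn_zero ..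

theorem xcl_add_one (a : Ordinal.{u}) : Xcl A (a + 1) = Loc (classMul (Xcl A a) A) := by
  unfold Xcl; exact Ordinal.limitRecOn_add_one ..

theorem xcl_limit {a : Ordinal.{u}} (ha : Order.IsSuccLimit a) :
    Xcl A a = fun (G : Type) [Group G] => ∃ b, ∃ _ : b < a, Xcl A b G := by
  unfold Xcl; exact Ordinal.limitRecOn_limit _ _ _ _ ha

variable {A}

theorem containsTrivial_xcl_zero : ContainsTrivial (Xcl A 0) := by
  rw [xcl_zero]; exact fun _ _ h => h

theorem IsoClosed.xcl (hA : IsoClosed A) (a : Ordinal.{u}) : IsoClosed (Xcl A a) := by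
  induction a using Ordinal.limitRecOn with
  | zero => rw [xcl_zero]; exact fun _ _ _ _ e _ => e.symm.injective.subsingleton
  | add_one a IH => rw [xcl_add_one]; exact (IH.classMul hA).loc
  | limit a ha IH =>
    rw [xcl_limit _ ha]
    rintro G H _ _ e ⟨b, hb, h⟩
    exact ⟨b, hb, IH b hb e h⟩

theorem xcl_le_add_one (hA : IsoClosed A) (htriv : ContainsTrivial A) (a : Ordinal.{u}) :
    Contains (Xcl A a) (Xcl A (a + 1)) := by
  rw [xcl_add_one]
  exact fun _ _ h => loc_of_mem ((hA.xcl a).classMul hA) (classMul_of_left (hA.xcl a) htriv h)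

theorem xcl_mono (hA : IsoClosed A) (htriv : ContainsTrivial A) {a b : Ordinal.{u}}
    (hab : a ≤ b) : Contains (Xcl A a) (Xcl A b) := by
  induction b using Ordinal.limitRecOn with
  | zero => rw [nonpos_iff_eq_zero.mp hab]; exact fun _ _ => id
  | add_one b IH =>
    obtain rfl | hlt := hab.eq_or_lt
    · exact fun _ _ => id
    · exact fun G _ h => xcl_le_add_one hA htriv b G (IH (Order.lt_add_one_iff.mp hlt) G h)
  | limit b hb IH =>
    obtain rfl | hlt := hab.eq_or_lt
    · exact fun _ _ => id
    · rw [xcl_limit _ hb]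
      exact fun _ _ h => ⟨a, hlt, h⟩

theorem xcl_classMul_xcl (hA : IsoClosed A) (htriv : ContainsTrivial A) (a b : Ordinal.{u}) :
    Contains (classMul (Xcl A a) (Xcl A b)) (Xcl A (a + b)) := by
  induction b using Ordinal.limitRecOn with
  | zero =>
    rw [xcl_zero, add_zero]
    exact fun _ _ => mem_of_classMul_subsingleton (hA.xcl a)
  | add_one c IH =>
    rw [xcl_add_one, ← add_assoc, xcl_add_one]
    intro G _ h
    refine loc_mono (classMul_mono IH fun _ _ => id) G ?_
    refine loc_mono (classMul_assoc_le (hA.xcl a) (hA.xcl c) hA) G ?_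
    exact classMul_loc_le (hA.xcl a) ((hA.xcl c).classMul hA) G h
  | limit b hb IH =>
    rw [xcl_limit _ hb]
    rintro G _ ⟨H, hH, hXH, c, hc, hXQ⟩
    exact xcl_mono hA htriv (add_le_add_right hc.le a) G (IH c hc G ⟨H, hH, hXH, hXQ⟩)

theorem contains_xclUnion (hA : IsoClosed A) : Contains A (xclUnion.{u} A) := by
  refine fun G _ h => ⟨0 + 1, ?_⟩
  rw [xcl_add_one]
  exact loc_of_mem ((hA.xcl 0).classMul hA) (classMul_of_right containsTrivial_xcl_zero hA h)

theorem directedUnionClosed_xclUnion (hA : IsoClosed A) (htriv : ContainsTrivial A) :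
    DirectedUnionClosed (xclUnion.{u} A) := by
  intro G _ ι f hdir hf htop
  rcases isEmpty_or_nonempty ι with hι | hι
  · rw [iSup_of_empty] at htop
    have : Subsingleton G := Subgroup.subsingleton_iff.mp (subsingleton_of_bot_eq_top htop)
    exact ⟨0, containsTrivial_xcl_zero G⟩
  · choose a ha using hf
    refine ⟨(⨆ i, a i) + 1, ?_⟩
    rw [xcl_add_one]
    refine loc_mono (fun _ _ => classMul_of_left (hA.xcl _) htriv) G ?_
    exact loc_of_iSup_eq_top f hdir
      (fun i => xcl_mono hA htriv (Ordinal.le_iSup a i) _ (ha i)) htop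

theorem extensionClosed_xclUnion (hA : IsoClosed A) (htriv : ContainsTrivial A) :
    ExtensionClosed (xclUnion.{u} A) :=
  fun G _ H hH ⟨a, hXH⟩ ⟨b, hXQ⟩ =>
    ⟨a + b, xcl_classMul_xcl hA htriv a b G ⟨H, hH, hXH, hXQ⟩⟩

end Hierarchy

section Minimality

variable {Y Z C : GroupClass}

theorem DirectedUnionClosed.mem_of_forall_closure (hC : DirectedUnionClosed C) {G : Type}
    [Group G] (h : ∀ s : Finset G, C (Subgroup.closure (s : Set G))) : C G := by
  classical
  refine hC G (Finset G) _ (fun s t => ⟨s ∪ t, ?_, ?_⟩) h ?_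
  · exact Subgroup.closure_mono (Finset.coe_subset.mpr Finset.subset_union_left)
  · exact Subgroup.closure_mono (Finset.coe_subset.mpr Finset.subset_union_right)
  · exact (Subgroup.eq_top_iff' _).mpr fun x =>
      Subgroup.mem_iSup_of_mem {x} (Subgroup.subset_closure (by simp))

theorem DirectedUnionClosed.mem_of_mulEquiv_freeGroup (hA : Contains classA C)
    (hDU : DirectedUnionClosed C) {F β : Type} [Group F] (e : F ≃* FreeGroup β) : C F := by
  classical
  let ι : (T : Finset β) → FreeGroup T →* F := fun T =>
    (e.symm : FreeGroup β →* F).comp (FreeGroup.map (↑))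
  have hι : ∀ T, Injective (ι T) := fun T =>
    e.symm.injective.comp (FreeGroup.map_injective Subtype.val_injective)
  have hmono : ∀ T T' : Finset β, T ⊆ T' → (ι T).range ≤ (ι T').range := fun T T' h => by
    have : ι T = (ι T').comp (FreeGroup.map (Set.inclusion (s := (T : Set β)) h)) :=
      FreeGroup.ext_hom _ _ fun x => by simp [ι]
    rw [this, MonoidHom.range_comp]
    exact Subgroup.map_le_range _ _
  refine hDU F (Finset β) (fun T => (ι T).range) ?_ (fun T => hA _ ?_) ?_
  · exact fun T T' => ⟨T ∪ T', hmono _ _ Finset.subset_union_left,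
      hmono _ _ Finset.subset_union_right⟩
  · exact Or.inl ⟨T.card,
      ⟨(MonoidHom.ofInjective (hι T)).symm.trans (FreeGroup.freeGroupCongr T.equivFin)⟩⟩
  · have he := Subgroup.map_top_of_surjective (e.symm : FreeGroup β →* F) e.symm.surjective
    rw [eq_top_iff, ← he, ← FreeGroup.closure_range_of, MonoidHom.map_closure,
      Subgroup.closure_le]
    rintro _ ⟨_, ⟨b, rfl⟩, rfl⟩
    exact Subgroup.mem_iSup_of_mem {b}
      ⟨FreeGroup.of ⟨b, Finset.mem_singleton_self b⟩, by simp [ι]⟩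

theorem subgroupsIn_classA (hA : Contains classA C) (hDU : DirectedUnionClosed C) :
    SubgroupsIn classA C := by
  rintro L K _ _ f hf (⟨n, ⟨e⟩⟩ | hK)
  · have hg : Injective (e.toMonoidHom.comp f) := e.injective.comp hf
    -- Nielsen–Schreier makes the range free.
    exact hDU.mem_of_mulEquiv_freeGroup hA
      ((MonoidHom.ofInjective hg).trans (IsFreeGroup.toFreeGroup _))
  · exact hA _ (Or.inr (hK.of_injective f hf))

theorem subgroupsIn_loc (hDU : DirectedUnionClosed C) (hY : SubgroupsIn Y C) :
    SubgroupsIn (Loc Y) C := by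
  classical
  intro L K _ _ f hf hK
  refine hDU.mem_of_forall_closure fun s => ?_
  obtain ⟨H, hsH, hH⟩ := hK (s.image f)
  have hle : Subgroup.closure (s : Set L) ≤ H.comap f :=
    (Subgroup.closure_le _).mpr fun x hx => hsH _ (Finset.mem_image_of_mem f hx)
  exact hY ((f.subgroupComap H).comp (Subgroup.inclusion hle))
    ((MonoidHom.subgroupComap_injective hf H).comp (Subgroup.inclusion_injective hle)) hH

theorem subgroupsIn_classMul (hExt : ExtensionClosed C) (hY : SubgroupsIn Y C)
    (hZ : SubgroupsIn Z C) : SubgroupsIn (classMul Y Z) C := by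
  rintro L K _ _ f hf ⟨N, hN, hYN, hZQ⟩
  have hinj : Injective (QuotientGroup.map (N.comap f) N f le_rfl) := by
    rw [← MonoidHom.ker_eq_bot_iff, QuotientGroup.ker_map, QuotientGroup.map_mk'_self]
  exact hExt L (N.comap f) (hN.comap f)
    (hY (f.subgroupComap N) (MonoidHom.subgroupComap_injective hf N) hYN) (hZ _ hinj hZQ)

theorem subgroupsIn_xcl {A : GroupClass} (hA : SubgroupsIn A C) (htriv : ContainsTrivial A)
    (hDU : DirectedUnionClosed C) (hExt : ExtensionClosed C) (a : Ordinal.{u}) :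
    SubgroupsIn (Xcl A a) C := by
  induction a using Ordinal.limitRecOn with
  | zero =>
    rw [xcl_zero]
    intro L K _ _ f hf hK
    have : Subsingleton L := hf.subsingleton
    exact hA (MonoidHom.id L) injective_id (htriv L)
  | add_one a IH => rw [xcl_add_one]; exact subgroupsIn_loc hDU (subgroupsIn_classMul hExt IH hA)
  | limit a ha IH =>
    rw [xcl_limit _ ha]
    rintro L K _ _ f hf ⟨b, hb, hK⟩
    exact IH b hb f hf hK

end Minimality

/-- `X = ⋃_a X_a`, and `X_a · X_b ⊆ X_{a+b}`. -/
theorem stmt8 :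
    (∀ (G : Type) [Group G], smallestX classA G ↔ ∃ a : Ordinal, Xcl classA a G) ∧
    (∀ (a b : Ordinal) (G : Type) [Group G],
      classMul (Xcl classA a) (Xcl classA b) G → Xcl classA (a + b) G) := by
  refine ⟨fun G _ => ⟨fun h => ?_, fun ⟨a, ha⟩ C hA hDU hExt => ?_⟩,
    xcl_classMul_xcl isoClosed_classA containsTrivial_classA⟩
  · exact h _ (contains_xclUnion isoClosed_classA)
      (directedUnionClosed_xclUnion isoClosed_classA containsTrivial_classA)
      (extensionClosed_xclUnion isoClosed_classA containsTrivial_classA)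
  · exact subgroupsIn_xcl (subgroupsIn_classA hA hDU) containsTrivial_classA hDU hExt a
      (MonoidHom.id G) injective_id ha
end

section
/- The smallest class of groups X containing all finitely generated free groups and all amenable groups and closed under directed unions and group extensions is closed under taking subgroups. -/
/-!
Let `Y` be the class of groups all of whose subgroups lie in `X`; by minimality of `X` it suffices
that `Y` contains `A` and is closed under directed unions and extensions. Subgroups of amenable
groups are amenable, and subgroups of free groups are free (Nielsen–Schreier), while a free group
of any rank is the directed union of finitely generated free groups. A subgroup `K` of a directed
union `⋃ Gᵢ` is the directed union of the `K ∩ Gᵢ`; a subgroup `K` of an extension of `N` by `G/N`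
is an extension of `K ∩ N` by `K/(K ∩ N) ↪ G/N`.
-/

theorem contains_smallestX (A : GroupClass) : Contains A (smallestX A) :=
  fun _ _ hG _ hA _ _ => hA _ hG

theorem directedUnionClosed_smallestX (A : GroupClass) : DirectedUnionClosed (smallestX A) :=
  fun G _ ι f hf hmem htop C hA hU hE => hU G ι f hf (fun i => hmem i C hA hU hE) htop

theorem extensionClosed_smallestX (A : GroupClass) : ExtensionClosed (smallestX A) :=
  fun G _ N hN hNX hQX C hA hU hE => hE G N hN (hNX C hA hU hE) (hQX C hA hU hE)

theorem smallestX_le {A C : GroupClass} (hA : Contains A C) (hU : DirectedUnionClosed C)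
    (hE : ExtensionClosed C) : Contains (smallestX A) C :=
  fun _ _ hG => hG C hA hU hE

/-- Quantifying over embeddings rather than subgroups makes this class closed under isomorphism, so
`smallestX` never has to be shown isomorphism-invariant. -/
def hereditaryCore (C : GroupClass) : GroupClass := fun G _ =>
  ∀ (K : Type) [Group K] (φ : K →* G), Function.Injective φ → C K

theorem Subgroup.iSup_comap_eq_top_of_directed {G K : Type} [Group G] [Group K] {ι : Type}
    {f : ι → Subgroup G} (hf : Directed (· ≤ ·) f) (htop : ⨆ i, f i = ⊤) {φ : K →* G}
    (hφ : Function.Injective φ) : ⨆ i, (f i).comap φ = ⊤ := by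
  refine eq_top_iff.2 fun x _ => ?_
  have hx : φ x ∈ ⨆ i, f i := htop ▸ Subgroup.mem_top _
  rcases isEmpty_or_nonempty ι with hι | hι
  · rw [iSup_of_empty, Subgroup.mem_bot, ← map_one φ] at hx
    exact hφ hx ▸ Subgroup.one_mem _
  · obtain ⟨i, hi⟩ := (Subgroup.mem_iSup_of_directed hf).1 hx
    exact Subgroup.mem_iSup_of_mem i hi

theorem MonoidHom.subgroupComap_injective_s9 {G K : Type} [Group G] [Group K] {φ : K →* G}
    (hφ : Function.Injective φ) (H : Subgroup G) : Function.Injective (φ.subgroupComap H) :=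
  fun _ _ h => Subtype.ext (hφ congr(($h).1))

theorem DirectedUnionClosed.hereditaryCore {C : GroupClass} (hU : DirectedUnionClosed C) :
    DirectedUnionClosed (hereditaryCore C) := by
  intro G _ ι f hf hmem htop K _ φ hφ
  refine hU K ι (fun i => (f i).comap φ)
    (Directed.mono_comp (g := Subgroup.comap φ) _ (fun _ _ => Subgroup.comap_mono) hf)
    (fun i => hmem i _ _ (φ.subgroupComap_injective_s9 hφ (f i)))
    (Subgroup.iSup_comap_eq_top_of_directed hf htop hφ)

theorem ExtensionClosed.hereditaryCore {C : GroupClass} (hE : ExtensionClosed C) :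
    ExtensionClosed (hereditaryCore C) := by
  intro G _ N hN hNC hQC K _ φ hφ
  let ψ := (QuotientGroup.mk' N).comp φ
  have hker : ψ.ker = N.comap φ := by rw [← MonoidHom.comap_ker, QuotientGroup.ker_mk']
  refine hE K ψ.ker inferInstance ?_ (hQC _ _ (QuotientGroup.kerLift_injective ψ))
  exact hNC _ ((φ.subgroupComap N).comp (MulEquiv.subgroupCongr hker).toMonoidHom)
    ((φ.subgroupComap_injective_s9 hφ N).comp (MulEquiv.subgroupCongr hker).injective)

theorem Amenable.of_equivariant_s9 {G K : Type} [Group G] [Group K] (h : Amenable G) (π : G → K)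
    (σ : K →* G) (hπ : ∀ k g, π (σ k * g) = k * π g) : Amenable K := by
  obtain ⟨m, hm_nonneg, hm_univ, hm_add, hm_inv⟩ := h
  refine ⟨fun s => m (π ⁻¹' s), fun s => hm_nonneg _, hm_univ, fun s t hst => ?_, fun k s => ?_⟩
  · simpa only [Set.preimage_union] using hm_add _ _ (hst.preimage π)
  · have hs : π ⁻¹' ((k * ·) '' s) = (σ k * ·) '' (π ⁻¹' s) := by
      simp only [Set.image_mul_left, ← Set.preimage_comp]
      congr 1
      ext g
      simp [← map_inv, hπ]
    simp only [hs, hm_inv]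

/-- A right transversal `T` of the image of `φ` yields the equivariant retraction `G → K`,
`φ k * t ↦ k`. -/
theorem Amenable.of_injective_s9 {G K : Type} [Group G] [Group K] (h : Amenable G) (φ : K →* G)
    (hφ : Function.Injective φ) : Amenable K := by
  obtain ⟨T, hT, -⟩ := φ.range.exists_isComplement_right 1
  let e := MonoidHom.ofInjective hφ
  refine h.of_equivariant_s9 (fun g => e.symm (hT.equiv g).1) φ fun k g => ?_
  have h_mul := hT.equiv_mul_left (e k) g
  rw [MonoidHom.ofInjective_apply] at h_mul
  rw [h_mul, map_mul, MulEquiv.symm_apply_apply]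

theorem FreeGroup.iSup_closure_image_of_finset (X : Type) :
    ⨆ T : Finset X, Subgroup.closure (FreeGroup.of '' (T : Set X)) = ⊤ := by
  rw [eq_top_iff, ← FreeGroup.closure_range_of, Subgroup.closure_le]
  rintro _ ⟨x, rfl⟩
  exact Subgroup.mem_iSup_of_mem {x} (Subgroup.subset_closure ⟨x, by simp, rfl⟩)

/-- A free group is the directed union of its finitely generated free factors. -/
theorem smallestX_classA_of_mulEquiv_freeGroup {X K : Type} [Group K] (ψ : FreeGroup X ≃* K) :
    smallestX classA K := by
  let f : Finset X → Subgroup K := fun T =>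
    (ψ.toMonoidHom.comp (FreeGroup.map ((↑) : T → X))).range
  have hf : ∀ T, f T = (Subgroup.closure (FreeGroup.of '' (T : Set X))).map ψ.toMonoidHom := by
    intro T
    simp only [f, MonoidHom.range_comp, FreeGroup.range_map, Subtype.range_coe_subtype]
    rfl
  refine directedUnionClosed_smallestX classA K (Finset X) f ?_ (fun T => ?_) ?_
  · refine Monotone.directed_le fun T T' hT => ?_
    rw [hf, hf]
    exact Subgroup.map_mono (Subgroup.closure_mono (Set.image_mono hT))
  · have hinj := ψ.injective.comp (FreeGroup.map_injective (Subtype.val_injective (p := (· ∈ T))))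
    exact contains_smallestX classA _ <| Or.inl ⟨T.card,
      ⟨(MonoidHom.ofInjective hinj).symm.trans (FreeGroup.freeGroupCongr T.equivFin)⟩⟩
  · simp only [hf, ← Subgroup.map_iSup, FreeGroup.iSup_closure_image_of_finset]
    exact Subgroup.map_top_of_surjective _ ψ.surjective

theorem smallestX_classA_of_injective_freeGroup {X K : Type} [Group K] (φ : K →* FreeGroup X)
    (hφ : Function.Injective φ) : smallestX classA K :=
  smallestX_classA_of_mulEquiv_freeGroup
    ((IsFreeGroup.mulEquiv φ.range).trans (MonoidHom.ofInjective hφ).symm)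

theorem contains_classA_hereditaryCore : Contains classA (hereditaryCore (smallestX classA)) := by
  rintro G _ (⟨n, ⟨e⟩⟩ | hG) K _ φ hφ
  · exact smallestX_classA_of_injective_freeGroup (e.toMonoidHom.comp φ) (e.injective.comp hφ)
  · exact contains_smallestX classA K (Or.inr (hG.of_injective_s9 φ hφ))

/-- the smallest class of groups containing all finitely generated
free groups and all amenable groups and closed under directed unions and
extensions is closed under taking subgroups. -/
theorem stmt9 (G : Type) [Group G] (hG : smallestX classA G) (H : Subgroup G) :
    smallestX classA H := by
  have hX : Contains (smallestX classA) (hereditaryCore (smallestX classA)) :=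
    smallestX_le contains_classA_hereditaryCore
      (directedUnionClosed_smallestX classA).hereditaryCore
      (extensionClosed_smallestX classA).hereditaryCore
  exact hX G hG H H.subtype H.subtype_injective
end

section
/- Let K be a division ring, G an infinite cyclic group, and K*G a crossed product ring. Then every nonzero left or right ideal of K*G is free of rank one; in particular K*G is a free ideal ring (fir). As a special case, the Laurent polynomial ring K[t, t⁻¹] over a division ring K (with t central) has the property that every nonzero left ideal is free of rank one. -/
/-!
Transporting along `G ≃* Multiplicative ℤ`, every element of `K*G` has a finite support in `ℤ`,
and the length of the shortest interval containing it serves as a degree. If `g` is no wider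
than `a`, subtracting a suitable left multiple `ι c * u m * g` kills the top coefficient of `a`
without widening its support; so a nonzero element of minimal width in a left ideal generates it.
Comparing top coefficients shows that `K*G` has no zero divisors, hence the ideal is isomorphic
to `A`. Right ideals of `A` are left ideals of `Aᵐᵒᵖ`, a crossed product of `Kᵐᵒᵖ` by
`Gᵐᵒᵖ ≃* ℤ`, and `K[T;T⁻¹]` is the crossed product with trivial action and twisting.
-/

structure IsCrossedProduct (K : Type*) [DivisionRing K] (Q : Type*) [Group Q]
    (A : Type*) [Ring A] (ι : K →+* A) (u : Q → Aˣ) : Prop where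
  free : ∀ a : A, ∃! d : Q →₀ K, a = d.sum fun q c => ι c * (u q : A)
  twist : ∀ q r : Q, ∃ c : Kˣ, (u q : A) * (u r : A) = ι c * (u (q * r) : A)
  conj₁ : ∀ (q : Q) (c : K), ∃ c' : K, (u q : A) * ι c = ι c' * (u q : A)
  conj₂ : ∀ (q : Q) (c : K), ∃ c' : K, ι c * (u q : A) = (u q : A) * ι c'

open Finsupp MulOpposite

namespace IsCrossedProduct

section

variable {K G A : Type*} [DivisionRing K] [Group G] [Ring A] {ι : K →+* A} {u : G → Aˣ}
  (h : IsCrossedProduct K G A ι u)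

noncomputable def coeff : A →+ (G →₀ K) :=
  AddMonoidHom.mk' (fun a => (h.free a).choose) fun a b => by
    refine ((h.free (a + b)).choose_spec.2 _ ?_).symm
    dsimp only
    rw [sum_add_index' (by simp) (by simp [add_mul]), ← (h.free a).choose_spec.1,
      ← (h.free b).choose_spec.1]

theorem sum_coeff (a : A) : (h.coeff a).sum (fun q c => ι c * (u q : A)) = a :=
  (h.free a).choose_spec.1.symm

theorem coeff_eq_of_sum {a : A} {d : G →₀ K} (hd : (d.sum fun q c => ι c * (u q : A)) = a) :
    h.coeff a = d :=
  ((h.free a).choose_spec.2 d hd.symm).symm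

theorem coeff_eq_zero_iff {a : A} : h.coeff a = 0 ↔ a = 0 := by
  refine ⟨fun ha => ?_, fun ha => ha ▸ map_zero h.coeff⟩
  rw [← h.sum_coeff a, ha, sum_zero_index]

theorem coeff_ι_mul (c : K) (q : G) : h.coeff (ι c * (u q : A)) = single q c :=
  h.coeff_eq_of_sum (sum_single_index (by simp))

include h in
theorem ι_injective : Function.Injective ι := fun c c' hc =>
  single_injective (1 : G) (by rw [← h.coeff_ι_mul, ← h.coeff_ι_mul, hc])

noncomputable def σ (q : G) (c : K) : K := (h.conj₁ q c).choose

theorem unit_mul_ι (q : G) (c : K) : (u q : A) * ι c = ι (h.σ q c) * (u q : A) :=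
  (h.conj₁ q c).choose_spec

theorem σ_eq_zero_iff {q : G} {c : K} : h.σ q c = 0 ↔ c = 0 := by
  rw [← map_eq_zero_iff ι h.ι_injective, ← map_eq_zero_iff ι h.ι_injective,
    ← Units.mul_left_eq_zero (u q), ← h.unit_mul_ι, Units.mul_right_eq_zero]

noncomputable def τ (q r : G) : Kˣ := (h.twist q r).choose

theorem unit_mul_unit (q r : G) :
    (u q : A) * (u r : A) = ι (h.τ q r) * (u (q * r) : A) :=
  (h.twist q r).choose_spec

theorem coeff_ι_mul_unit_mul (c : K) (q : G) (b : A) (p : G) :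
    h.coeff (ι c * u q * b) p = c * h.σ q (h.coeff b (q⁻¹ * p)) * h.τ q (q⁻¹ * p) := by
  have monomial (r : G) (e : K) : ι c * u q * (ι e * u r) =
      ι (c * h.σ q e * h.τ q r) * (u (q * r) : A) := by
    rw [map_mul, map_mul, mul_assoc, ← mul_assoc (u q : A), h.unit_mul_ι, mul_assoc,
      h.unit_mul_unit]
    simp only [mul_assoc]
  conv_lhs => rw [← h.sum_coeff b, mul_sum, map_finsuppSum, Finsupp.sum_apply]
  simp only [monomial, coeff_ι_mul]
  rw [sum_eq_single (q⁻¹ * p)]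
  · simp
  · intro r _ hr
    exact single_eq_of_ne (by rintro rfl; simp at hr)
  · simp [h.σ_eq_zero_iff.2 rfl]

noncomputable def ρ (q : G) (c : K) : K := (h.conj₂ q c).choose

theorem ι_mul_unit (q : G) (c : K) : ι c * (u q : A) = (u q : A) * ι (h.ρ q c) :=
  (h.conj₂ q c).choose_spec

theorem σ_ρ (q : G) (c : K) : h.σ q (h.ρ q c) = c :=
  h.ι_injective <| (Units.mul_left_inj (u q)).1 <|
    ((h.ι_mul_unit q c).trans (h.unit_mul_ι q _)).symm

theorem ρ_σ (q : G) (c : K) : h.ρ q (h.σ q c) = c :=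
  h.ι_injective <| (Units.mul_right_inj (u q)).1 <|
    ((h.unit_mul_ι q c).trans (h.ι_mul_unit q _)).symm

theorem ρ_eq_zero_iff {q : G} {c : K} : h.ρ q c = 0 ↔ c = 0 := by
  rw [← h.σ_eq_zero_iff, h.σ_ρ]

-- Right coordinates are the `ρ`-twists of the left ones.
include h in
theorem existsUnique_sum_unit_mul (a : A) :
    ∃! d : G →₀ K, a = d.sum fun q c => (u q : A) * ι c := by
  have twisted (f : G → K → K) (hf : ∀ {q c}, f q c = 0 ↔ c = 0) (d : G →₀ K) :
      ∃ d' : G →₀ K, ∀ q, d' q = f q (d q) :=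
    ⟨onFinset d.support (fun q => f q (d q)) fun q hq => mem_support_iff.2 (hf.not.1 hq),
      fun _ => rfl⟩
  have sum_eq (d d' : G →₀ K) (hd' : ∀ q, d' q = h.σ q (d q)) :
      (d.sum fun q c => (u q : A) * ι c) = d'.sum fun q c => ι c * (u q : A) := by
    have hsupp : d'.support = d.support := by
      ext q; simp [hd', h.σ_eq_zero_iff]
    simp only [Finsupp.sum, hsupp, hd', h.unit_mul_ι]
  obtain ⟨d₀, hd₀⟩ := twisted h.ρ h.ρ_eq_zero_iff (h.coeff a)
  refine ⟨d₀, ?_, fun d hd => ?_⟩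
  · dsimp only
    rw [sum_eq d₀ (h.coeff a) fun q => by rw [hd₀, h.σ_ρ], h.sum_coeff]
  · obtain ⟨d', hd'⟩ := twisted h.σ h.σ_eq_zero_iff d
    have hcoeff : h.coeff a = d' := h.coeff_eq_of_sum ((sum_eq d d' hd').symm.trans hd.symm)
    ext q
    rw [hd₀, hcoeff, hd', h.ρ_σ]

include h in
theorem comp_mulEquiv {H : Type*} [Group H] (e : H ≃* G) :
    IsCrossedProduct K H A ι fun q => u (e q) where
  free a := by
    refine (existsUnique_congr fun d => ?_).1
      ((Equiv.existsUnique_congr_left (equivCongrLeft e.toEquiv).symm).1 (h.free a))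
    rw [Equiv.symm_symm, equivCongrLeft_apply, sum_equivMapDomain]
    rfl
  twist q r := by
    obtain ⟨c, hc⟩ := h.twist (e q) (e r)
    exact ⟨c, by rw [hc, map_mul]⟩
  conj₁ q := h.conj₁ (e q)
  conj₂ q := h.conj₂ (e q)

include h in
protected theorem op :
    IsCrossedProduct Kᵐᵒᵖ Gᵐᵒᵖ Aᵐᵒᵖ (RingHom.op ι) fun q => Units.opEquiv.symm (op (u q.unop)) where
  free a := by
    let E : (G →₀ K) ≃ (Gᵐᵒᵖ →₀ Kᵐᵒᵖ) :=
      (equivCongrLeft opEquiv).trans (mapRange.addEquiv opAddEquiv).toEquiv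
    refine (existsUnique_congr fun d => ?_).1
      ((Equiv.existsUnique_congr_left E).1 (h.existsUnique_sum_unit_mul a.unop))
    rw [← op_inj, op_unop,
      show E.symm d = equivMapDomain opEquiv.symm (mapRange unop unop_zero d) from rfl,
      sum_equivMapDomain, sum_mapRange_index (by simp)]
    simp [Finsupp.sum]
  twist q r := by
    refine ⟨Units.mk0 (op (h.ρ (r.unop * q.unop) (h.τ r.unop q.unop)))
      (by simp [h.ρ_eq_zero_iff]), ?_⟩
    apply unop_injective
    simp [h.unit_mul_unit, h.ι_mul_unit]
  conj₁ q c := ⟨op (h.ρ q.unop c.unop), unop_injective (by simp [h.ι_mul_unit])⟩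
  conj₂ q c := ⟨op (h.σ q.unop c.unop), unop_injective (by simp [h.unit_mul_ι])⟩

end

section InfiniteCyclic

variable {K A : Type*} [DivisionRing K] [Ring A] {ι : K →+* A} {u : Multiplicative ℤ → Aˣ}
  (h : IsCrossedProduct K (Multiplicative ℤ) A ι u)

open Multiplicative

noncomputable def support (a : A) : Finset ℤ := (h.coeff a).support.map toAdd.toEmbedding

theorem mem_support {a : A} {n : ℤ} : n ∈ h.support a ↔ h.coeff a (ofAdd n) ≠ 0 := by
  simp [support]

theorem support_eq_empty {a : A} : h.support a = ∅ ↔ a = 0 := by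
  simp [support, h.coeff_eq_zero_iff]

theorem coeff_eq_zero_of_support_subset {a : A} {s : Set ℤ} {n : ℤ}
    (ha : ↑(h.support a) ⊆ s) (hn : n ∉ s) : h.coeff a (ofAdd n) = 0 :=
  not_not.1 fun hne => hn (ha (h.mem_support.2 hne))

theorem coeff_ι_mul_ofAdd_mul (c : K) (m : ℤ) (b : A) (n : ℤ) :
    h.coeff (ι c * u (ofAdd m) * b) (ofAdd n) =
      c * h.σ (ofAdd m) (h.coeff b (ofAdd (n - m))) * h.τ (ofAdd m) (ofAdd (n - m)) := by
  rw [coeff_ι_mul_unit_mul, ← ofAdd_neg, ← ofAdd_add, neg_add_eq_sub]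

theorem coeff_mul_ofAdd (x b : A) (n : ℤ) :
    h.coeff (x * b) (ofAdd n) = ∑ m ∈ h.support x,
      h.coeff x (ofAdd m) * h.σ (ofAdd m) (h.coeff b (ofAdd (n - m))) *
        h.τ (ofAdd m) (ofAdd (n - m)) := by
  conv_lhs => rw [← h.sum_coeff x]
  rw [Finsupp.sum_mul, map_finsuppSum, Finsupp.sum_apply, Finsupp.sum, support, Finset.sum_map]
  exact Finset.sum_congr rfl fun q _ => h.coeff_ι_mul_ofAdd_mul _ q.toAdd b n

include h in
theorem noZeroDivisors : NoZeroDivisors A := by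
  refine ⟨fun {x b} hxb => ?_⟩
  by_contra! hne
  have hx : (h.support x).Nonempty :=
    Finset.nonempty_iff_ne_empty.2 (h.support_eq_empty.not.2 hne.1)
  have hb : (h.support b).Nonempty :=
    Finset.nonempty_iff_ne_empty.2 (h.support_eq_empty.not.2 hne.2)
  set s := (h.support x).max' hx
  set t := (h.support b).max' hb
  have htop : h.coeff (x * b) (ofAdd (s + t)) ≠ 0 := by
    rw [h.coeff_mul_ofAdd, Finset.sum_eq_single s]
    · rw [add_sub_cancel_left]
      exact mul_ne_zero (mul_ne_zero (h.mem_support.1 (Finset.max'_mem _ hx))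
        (h.σ_eq_zero_iff.not.2 (h.mem_support.1 (Finset.max'_mem _ hb)))) (Units.ne_zero _)
    · intro m hm hms
      have hlt : m < s := lt_of_le_of_ne (Finset.le_max' _ m hm) hms
      rw [h.coeff_eq_zero_of_support_subset (s := Set.Iic t)
        (fun n hn => Finset.le_max' _ n hn) (by rw [Set.mem_Iic]; omega), h.σ_eq_zero_iff.2 rfl]
      simp
    · exact fun hs => absurd (Finset.max'_mem _ hx) hs
  simp [hxb, map_zero] at htop

def SupportedInWidth (a : A) (d : ℕ) : Prop := ∃ l : ℤ, ↑(h.support a) ⊆ Set.Ico l (l + d)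

theorem exists_support_subset_Icc (a : A) : ∃ lo hi : ℤ, ↑(h.support a) ⊆ Set.Icc lo hi :=
  bddBelow_bddAbove_iff_subset_Icc.1 ⟨(h.support a).bddBelow, (h.support a).bddAbove⟩

theorem exists_supportedInWidth (a : A) : ∃ d, h.SupportedInWidth a d := by
  obtain ⟨lo, hi, hsub⟩ := h.exists_support_subset_Icc a
  exact ⟨(hi - lo + 1).toNat, lo, hsub.trans (Set.Icc_subset_Ico_right (by omega))⟩

theorem eq_zero_of_supportedInWidth_zero {a : A} (ha : h.SupportedInWidth a 0) : a = 0 := by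
  obtain ⟨l, hl⟩ := ha
  rw [← h.support_eq_empty, ← Finset.coe_eq_empty, ← Set.subset_empty_iff]
  simpa using hl

/-- Cancelling the top coefficient of `a` against that of `g`, whose support is no wider. -/
theorem exists_support_sub_mul_subset_Ico {g a : A} {l lo t : ℤ} {e : ℕ}
    (hg : ↑(h.support g) ⊆ Set.Icc l (l + e)) (hgtop : l + e ∈ h.support g)
    (ha : ↑(h.support a) ⊆ Set.Icc lo t) (hwidth : lo + e ≤ t) :
    ∃ x, ↑(h.support (a - x * g)) ⊆ Set.Ico lo t := by
  set m := t - (l + e)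
  set c := h.coeff a (ofAdd t) * (h.τ (ofAdd m) (ofAdd (l + e)) : K)⁻¹ *
    (h.σ (ofAdd m) (h.coeff g (ofAdd (l + e))))⁻¹
  have hσ : h.σ (ofAdd m) (h.coeff g (ofAdd (l + e))) ≠ 0 :=
    h.σ_eq_zero_iff.not.2 (h.mem_support.1 hgtop)
  refine ⟨ι c * u (ofAdd m), fun n hn => ?_⟩
  rw [Finset.mem_coe, h.mem_support, map_sub, Finsupp.sub_apply, h.coeff_ι_mul_ofAdd_mul] at hn
  by_contra hout
  rcases eq_or_ne n t with rfl | hnt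
  · apply hn
    rw [show n - m = l + e by omega, sub_eq_zero, mul_assoc, mul_assoc, mul_assoc,
      inv_mul_cancel_left₀ hσ, inv_mul_cancel₀ (Units.ne_zero _), mul_one]
  · rw [Set.mem_Ico, not_and_or, not_le, not_lt] at hout
    rw [h.coeff_eq_zero_of_support_subset ha (by rw [Set.mem_Icc]; omega),
      h.coeff_eq_zero_of_support_subset hg (by rw [Set.mem_Icc]; omega),
      h.σ_eq_zero_iff.2 rfl] at hn
    simp at hn

theorem exists_supportedInWidth_sub_mul {g : A} {l : ℤ} {e : ℕ}
    (hg : ↑(h.support g) ⊆ Set.Icc l (l + e)) (hgtop : l + e ∈ h.support g) (a : A) :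
    ∃ x, h.SupportedInWidth (a - x * g) e := by
  obtain ⟨lo, hi, ha⟩ := h.exists_support_subset_Icc a
  suffices reduce : ∀ (k : ℕ) (a : A), ↑(h.support a) ⊆ Set.Ico lo (lo + e + k) →
      ∃ x, ↑(h.support (a - x * g)) ⊆ Set.Ico lo (lo + e) by
    obtain ⟨x, hx⟩ := reduce (hi - lo + 1).toNat a (ha.trans (Set.Icc_subset_Ico_right (by omega)))
    exact ⟨x, lo, hx⟩
  intro k
  induction k with
  | zero => exact fun a ha => ⟨0, by simpa using ha⟩
  | succ k ih =>
    intro a ha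
    rw [Nat.cast_succ, ← add_assoc, Set.Ico_add_one_right_eq_Icc] at ha
    obtain ⟨x₁, hx₁⟩ := h.exists_support_sub_mul_subset_Ico hg hgtop ha (by omega)
    obtain ⟨x₂, hx₂⟩ := ih _ hx₁
    exact ⟨x₁ + x₂, by rwa [add_mul, ← sub_sub]⟩

include h in
theorem exists_eq_span_singleton {I : Ideal A} (hI : I ≠ ⊥) :
    ∃ g ≠ 0, I = Ideal.span {g} := by
  classical
  have hwidth : ∃ d, ∃ g ∈ I, g ≠ 0 ∧ h.SupportedInWidth g d := by
    obtain ⟨g, hgI, hg⟩ := Submodule.exists_mem_ne_zero_of_ne_bot hI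
    obtain ⟨d, hd⟩ := h.exists_supportedInWidth g
    exact ⟨d, g, hgI, hg, hd⟩
  obtain ⟨g, hgI, hg, l, hgl⟩ := Nat.find_spec hwidth
  have hmin {d : ℕ} {b : A} (hbI : b ∈ I) (hbd : h.SupportedInWidth b d)
      (hd : d < Nat.find hwidth) : b = 0 := by
    by_contra hb
    exact (Nat.find_min' hwidth ⟨b, hbI, hb, hbd⟩).not_gt hd
  obtain ⟨e, he⟩ : ∃ e, Nat.find hwidth = e + 1 :=
    Nat.exists_eq_succ_of_ne_zero fun h0 =>
      hg (h.eq_zero_of_supportedInWidth_zero (h0 ▸ ⟨l, hgl⟩))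
  rw [he, Nat.cast_succ, ← add_assoc, Set.Ico_add_one_right_eq_Icc] at hgl
  have hgtop : l + e ∈ h.support g := by
    by_contra hnot
    refine hg (hmin (d := e) hgI ⟨l, fun n hn => ?_⟩ (by omega))
    exact ⟨(hgl hn).1, (hgl hn).2.lt_of_ne fun hne => hnot (hne ▸ hn)⟩
  refine ⟨g, hg, le_antisymm (fun a ha => ?_) ((Ideal.span_singleton_le_iff_mem I).2 hgI)⟩
  obtain ⟨x, hx⟩ := h.exists_supportedInWidth_sub_mul hgl hgtop a
  have hr := hmin (I.sub_mem ha (I.mul_mem_left x hgI)) hx (by omega)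
  exact Ideal.mem_span_singleton'.2 ⟨x, (sub_eq_zero.1 hr).symm⟩

include h in
theorem nonempty_linearEquiv_of_ne_bot {I : Ideal A} (hI : I ≠ ⊥) : Nonempty (I ≃ₗ[A] A) := by
  have : Nontrivial A := h.ι_injective.nontrivial
  have := h.noZeroDivisors
  have := NoZeroDivisors.to_isDomain A
  obtain ⟨g, hg, rfl⟩ := h.exists_eq_span_singleton hI
  exact ⟨(LinearEquiv.toSpanNonzeroSingleton A A g hg).symm⟩

end InfiniteCyclic

end IsCrossedProduct

open LaurentPolynomial in
theorem LaurentPolynomial.isCrossedProduct (K : Type*) [DivisionRing K] :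
    IsCrossedProduct K (Multiplicative ℤ) K[T;T⁻¹] C fun n => (isUnit_T n.toAdd).unit where
  free a := by
    have hsum (d : Multiplicative ℤ →₀ K) :
        (d.sum fun n c => C c * ((isUnit_T (R := K) n.toAdd).unit : K[T;T⁻¹])) =
          AddMonoidAlgebra.ofCoeff (Finsupp.equivMapDomain Multiplicative.toAdd d) := by
      simp only [IsUnit.unit_spec, ← single_eq_C_mul_T]
      rw [Finsupp.equivMapDomain_eq_mapDomain, Finsupp.mapDomain,
        AddMonoidAlgebra.ofCoeff_finsuppSum]
      rfl
    simp only [hsum]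
    simpa using (Equiv.existsUnique_congr_left
      (Finsupp.equivCongrLeft (M := K) Multiplicative.toAdd).symm).1
      (⟨a.coeff, rfl, fun f hf => hf ▸ rfl⟩ : ∃! f, a = AddMonoidAlgebra.ofCoeff f)
  twist m n := ⟨1, by
    simp only [IsUnit.unit_spec, Units.val_one, map_one, one_mul, toAdd_mul, T_add]⟩
  conj₁ n c := ⟨c, (commute_T _ _).eq⟩
  conj₂ n c := ⟨c, (commute_T _ _).eq.symm⟩

theorem nonempty_linearEquiv_of_mulOpposite {A : Type*} [Ring A]
    (hA : ∀ I : Ideal Aᵐᵒᵖ, I ≠ ⊥ → Nonempty (I ≃ₗ[Aᵐᵒᵖ] Aᵐᵒᵖ))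
    {J : Submodule Aᵐᵒᵖ A} (hJ : J ≠ ⊥) : Nonempty (J ≃ₗ[Aᵐᵒᵖ] A) := by
  let φ : A ≃ₗ[Aᵐᵒᵖ] Aᵐᵒᵖ := MulOpposite.opLinearEquiv Aᵐᵒᵖ
  obtain ⟨ψ⟩ := hA (J.map (φ : A →ₗ[Aᵐᵒᵖ] Aᵐᵒᵖ)) (by rwa [Ne, Submodule.map_eq_bot_iff])
  exact ⟨(φ.submoduleMap J).trans (ψ.trans φ.symm)⟩

/-- for a division ring `K` and an infinite cyclic group `G`, every
nonzero left or right ideal of a crossed product `K*G` is free of rank one (so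
`K*G` is a fir); in particular every nonzero left ideal of the Laurent polynomial
ring `K[t,t⁻¹]` is free of rank one. -/
theorem stmt11 (K : Type) [DivisionRing K] (G : Type) [Group G]
    (hcyc : Nonempty (G ≃* Multiplicative ℤ))
    (A : Type) [Ring A] (ι : K →+* A) (u : G → Aˣ)
    (h : IsCrossedProduct K G A ι u) :
    ((∀ I : Ideal A, I ≠ ⊥ → Nonempty (↥I ≃ₗ[A] A)) ∧
      (∀ J : Submodule Aᵐᵒᵖ A, J ≠ ⊥ → Nonempty (↥J ≃ₗ[Aᵐᵒᵖ] A))) ∧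
    (∀ I : Ideal (LaurentPolynomial K), I ≠ ⊥ →
      Nonempty (↥I ≃ₗ[LaurentPolynomial K] LaurentPolynomial K)) := by
  obtain ⟨e⟩ := hcyc
  have hℤ := h.comp_mulEquiv e.symm
  have hℤop := h.op.comp_mulEquiv (MulOpposite.opMulEquiv.trans e.symm.op)
  exact ⟨⟨fun I hI => hℤ.nonempty_linearEquiv_of_ne_bot hI,
      fun J hJ => nonempty_linearEquiv_of_mulOpposite
        (fun I hI => hℤop.nonempty_linearEquiv_of_ne_bot hI) hJ⟩,
    fun I hI => (LaurentPolynomial.isCrossedProduct K).nonempty_linearEquiv_of_ne_bot hI⟩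
end
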